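/- arXiv:1001.3258 — 2 statements merged into one kernel-verified Lean document; each statement's English description precedes it below -/
import Mathlib

section
/- Let A be a real M×N matrix, Ã = [[0, A],[Aᵀ, 0]], and let E be a subspace of ℝ^{M+N}. Let (σ, u, v) be a singular triplet of A with z = (1/√2)(uᵀ, vᵀ)ᵀ, and suppose sin∠(z, E) = ε < 1. Then there exists a unit vector w ∈ E with ‖Ã w − σ w‖ ≤ (ε/√(1−ε²)) (σ + ‖A‖), where ‖A‖ is the spectral norm. -/
/-!
Normalise a vector `y ∈ E` with `‖z - y‖ ≤ ε`. Since `Ã - σ` kills `z`, the residual of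
`y / ‖y‖` is that of the component `p = y - ⟪z, y⟫ z` of `y` orthogonal to `z`, divided by `‖y‖`.
The operator bound gives `‖(Ã - σ) p‖ ≤ (‖A‖ + σ) ‖p‖`, and `‖z - y‖ ≤ ε` forces
`‖p‖ ≤ ε ‖y‖`, which yields even the sharper bound `ε (σ + ‖A‖)`.
-/

open Matrix
open scoped RealInnerProductSpace

section InnerProductSpace

variable {F : Type*} [NormedAddCommGroup F] [InnerProductSpace ℝ F]

theorem norm_sub_inner_smul_le_mul_norm {y z : F} {ε : ℝ} (hz : ‖z‖ = 1) (h : ‖z - y‖ ≤ ε) :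
    ‖y - ⟪z, y⟫ • z‖ ≤ ε * ‖y‖ := by
  have hε : 0 ≤ ε := (norm_nonneg _).trans h
  have hzy : 1 - 2 * ⟪z, y⟫ + ‖y‖ ^ 2 ≤ ε ^ 2 := by
    rw [← one_pow 2, ← hz, ← norm_sub_sq_real]
    gcongr
  have hp : ‖y - ⟪z, y⟫ • z‖ ^ 2 = ‖y‖ ^ 2 - ⟪z, y⟫ ^ 2 := by
    rw [norm_sub_sq_real, inner_smul_right, real_inner_comm, norm_smul, hz, Real.norm_eq_abs]
    ring_nf
    rw [sq_abs]
    ring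
  refine (pow_le_pow_iff_left₀ (norm_nonneg _) (by positivity) two_ne_zero).mp ?_
  rw [hp, mul_pow]
  rcases le_or_gt 1 (ε ^ 2) with h1 | h1
  · nlinarith [sq_nonneg ⟪z, y⟫, sq_nonneg ‖y‖]
  -- `2 ⟪z, y⟫ ≥ (1 - ε²) + ‖y‖²`, and AM–GM bounds the right side by `2 √(1 - ε²) ‖y‖`.
  · nlinarith [sq_nonneg (1 - ε ^ 2 - ‖y‖ ^ 2)]

theorem exists_norm_eq_one_mem_norm_apply_le {g : F →ₗ[ℝ] F} {C : ℝ}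
    (hg : ∀ x, ‖g x‖ ≤ C * ‖x‖) {z y : F} (hz : ‖z‖ = 1) (hgz : g z = 0)
    {K : Submodule ℝ F} (hy : y ∈ K) {ε : ℝ} (hzy : ‖z - y‖ ≤ ε) (hε : ε < 1) :
    ∃ w ∈ K, ‖w‖ = 1 ∧ ‖g w‖ ≤ ε * C := by
  have hy0 : y ≠ 0 := by
    rintro rfl
    rw [sub_zero, hz] at hzy
    linarith
  have hC : 0 ≤ C := by simpa [hz] using (norm_nonneg _).trans (hg z)
  have hgy : g y = g (y - ⟪z, y⟫ • z) := by simp [hgz]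
  refine ⟨‖y‖⁻¹ • y, K.smul_mem _ hy, norm_smul_inv_norm hy0, ?_⟩
  calc ‖g (‖y‖⁻¹ • y)‖ = ‖y‖⁻¹ * ‖g (y - ⟪z, y⟫ • z)‖ := by
        rw [map_smul, norm_smul, norm_inv, norm_norm, hgy]
    _ ≤ ‖y‖⁻¹ * (C * (ε * ‖y‖)) := by
        gcongr
        exact (hg _).trans (by gcongr; exact norm_sub_inner_smul_le_mul_norm hz hzy)
    _ = ε * C := by field_simp

end InnerProductSpace

theorem sqrt_dotProduct_self_eq_norm {ι : Type*} [Fintype ι] (x : ι → ℝ) :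
    √(x ⬝ᵥ x) = ‖WithLp.toLp 2 x‖ := by
  rw [norm_eq_sqrt_real_inner, EuclideanSpace.inner_toLp_toLp, star_trivial]

theorem fromBlocks_zero_transpose_mulVec_sumElim {R m n : Type*} [CommSemiring R]
    [Fintype m] [Fintype n] {A : Matrix m n R} {σ : R} {u : m → R} {v : n → R}
    (hAv : A *ᵥ v = σ • u) (hATu : Aᵀ *ᵥ u = σ • v) :
    fromBlocks 0 A Aᵀ 0 *ᵥ Sum.elim u v = σ • Sum.elim u v := by
  rw [fromBlocks_mulVec]
  ext (i | i) <;> simp [hAv, hATu]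

theorem approximate_eigenvector_in_subspace_general (M N : ℕ)
    (A : Matrix (Fin M) (Fin N) ℝ)
    (σ : ℝ) (hσ : 0 ≤ σ) (u : Fin M → ℝ) (v : Fin N → ℝ)
    (hu : u ⬝ᵥ u = 1) (hv : v ⬝ᵥ v = 1)
    (hAv : A.mulVec v = σ • u) (hATu : Aᵀ.mulVec u = σ • v)
    (normA : ℝ)
    (hop : ∀ x : Fin M ⊕ Fin N → ℝ,
      Real.sqrt ((fromBlocks 0 A Aᵀ 0).mulVec x ⬝ᵥ (fromBlocks 0 A Aᵀ 0).mulVec x)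
        ≤ normA * Real.sqrt (x ⬝ᵥ x))
    (E : Submodule ℝ (Fin M ⊕ Fin N → ℝ)) (ε : ℝ) (hε : ε < 1)
    (hdist : ∃ y ∈ E,
      Real.sqrt (((Real.sqrt 2)⁻¹ • Sum.elim u v - y) ⬝ᵥ
        ((Real.sqrt 2)⁻¹ • Sum.elim u v - y)) ≤ ε) :
    ∃ w ∈ E, w ⬝ᵥ w = 1 ∧
      Real.sqrt (((fromBlocks 0 A Aᵀ 0).mulVec w - σ • w) ⬝ᵥ
          ((fromBlocks 0 A Aᵀ 0).mulVec w - σ • w)) ≤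
        ε / Real.sqrt (1 - ε ^ 2) * (σ + normA) := by
  obtain ⟨y, hyE, hzy⟩ := hdist
  set B := fromBlocks 0 A Aᵀ 0
  set z : Fin M ⊕ Fin N → ℝ := (√2)⁻¹ • Sum.elim u v
  have hz : ‖WithLp.toLp 2 z‖ = 1 := by
    rw [← sqrt_dotProduct_self_eq_norm, Real.sqrt_eq_one, smul_dotProduct, dotProduct_smul,
      sumElim_dotProduct_sumElim, hu, hv, smul_smul, smul_eq_mul, ← mul_inv,
      Real.mul_self_sqrt zero_le_two]
    norm_num
  set g := toLpLin 2 2 B - σ • LinearMap.id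
  have hgz : g (WithLp.toLp 2 z) = 0 := by
    simp [g, toLpLin_toLp, z, B, fromBlocks_zero_transpose_mulVec_sumElim hAv hATu]
  have hg : ∀ x, ‖g x‖ ≤ (σ + normA) * ‖x‖ := fun x => calc
    ‖g x‖ ≤ ‖σ • x‖ + ‖toLpLin 2 2 B x‖ := (norm_sub_le _ _).trans_eq (add_comm _ _)
    _ ≤ σ * ‖x‖ + normA * ‖x‖ := by
        gcongr
        · rw [norm_smul, Real.norm_of_nonneg hσ]
        · have := hop (WithLp.ofLp x)
          rwa [sqrt_dotProduct_self_eq_norm, sqrt_dotProduct_self_eq_norm, WithLp.toLp_ofLp] at this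
    _ = (σ + normA) * ‖x‖ := by ring
  obtain ⟨w, hwE, hw1, hgw⟩ := exists_norm_eq_one_mem_norm_apply_le hg hz hgz
    (K := E.comap (WithLp.linearEquiv 2 ℝ _).toLinearMap) (y := WithLp.toLp 2 y) hyE
    (by rwa [← sqrt_dotProduct_self_eq_norm]) hε
  have hε0 : 0 ≤ ε := (Real.sqrt_nonneg _).trans hzy
  refine ⟨WithLp.ofLp w, hwE, ?_, ?_⟩
  · rw [← Real.sqrt_eq_one, sqrt_dotProduct_self_eq_norm, WithLp.toLp_ofLp, hw1]
  calc √((B *ᵥ WithLp.ofLp w - σ • WithLp.ofLp w) ⬝ᵥ (B *ᵥ WithLp.ofLp w - σ • WithLp.ofLp w))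
      = ‖g w‖ := sqrt_dotProduct_self_eq_norm _
    _ ≤ ε * (σ + normA) := hgw
    _ ≤ ε * (σ + normA) / √(1 - ε ^ 2) :=
        le_div_self ((norm_nonneg _).trans hgw) (Real.sqrt_pos.2 (by nlinarith))
          (Real.sqrt_le_one.2 (by nlinarith))
    _ = ε / √(1 - ε ^ 2) * (σ + normA) := by ring

/-- If the distance from z = (1/√2)(uᵀ,vᵀ)ᵀ to the subspace E is at most ε < 1,
then E contains a unit vector w with ‖Ãw − σw‖ ≤ (ε/√(1−ε²))(σ + ‖A‖). -/
theorem approximate_eigenvector_in_subspace (M N : ℕ)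
    (A : Matrix (Fin M) (Fin N) ℝ)
    (σ : ℝ) (hσ : 0 ≤ σ) (u : Fin M → ℝ) (v : Fin N → ℝ)
    (hu : u ⬝ᵥ u = 1) (hv : v ⬝ᵥ v = 1)
    (hAv : A.mulVec v = σ • u) (hATu : Aᵀ.mulVec u = σ • v)
    (normA : ℝ) (hnA : 0 ≤ normA)
    (hop : ∀ x : Fin M ⊕ Fin N → ℝ,
      Real.sqrt ((fromBlocks 0 A Aᵀ 0).mulVec x ⬝ᵥ (fromBlocks 0 A Aᵀ 0).mulVec x)
        ≤ normA * Real.sqrt (x ⬝ᵥ x))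
    (E : Submodule ℝ (Fin M ⊕ Fin N → ℝ)) (ε : ℝ) (hε : ε < 1)
    (hdist : ∃ y ∈ E,
      Real.sqrt (((Real.sqrt 2)⁻¹ • Sum.elim u v - y) ⬝ᵥ
        ((Real.sqrt 2)⁻¹ • Sum.elim u v - y)) ≤ ε) :
    ∃ w ∈ E, w ⬝ᵥ w = 1 ∧
      Real.sqrt (((fromBlocks 0 A Aᵀ 0).mulVec w - σ • w) ⬝ᵥ
          ((fromBlocks 0 A Aᵀ 0).mulVec w - σ • w)) ≤
        ε / Real.sqrt (1 - ε ^ 2) * (σ + normA) :=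
  approximate_eigenvector_in_subspace_general M N A σ hσ u v hu hv hAv hATu normA hop E ε hε hdist
end

section
/- With the Lanczos bidiagonalization relations AQ_m = P_m B_m and Aᵀ P_m = Q_m B_mᵀ + β_m q_{m+1} e_mᵀ and Ã = [[0, A],[Aᵀ, 0]], W = [[P_m, 0],[0, Q_m]], the matrix C̃ := Wᵀ(Ã − τI)²W equals [[τ²I + B_m B_mᵀ + β_m² e_m e_mᵀ, −2τ B_m],[−2τ B_mᵀ, τ²I + B_mᵀ B_m]]. -/
/-!
Expanding the square blockwise, `(Ã - τI)² = [[τ²I + AAᵀ, -2τA], [-2τAᵀ, τ²I + AᵀA]]`, and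
conjugating by the block-diagonal `W` leaves the compressions `PᵀAQ`, `QᵀAᵀP`, `QᵀAᵀAQ` and
`PᵀAAᵀP`. The first three follow from `AQ = PB` and `PᵀP = I` alone. The last one is the Gram
matrix of `AᵀP = QBᵀ + β q eᵀ`: its cross terms vanish because `q` is orthogonal to the columns
of `Q`, and since `‖q‖ = 1` the rank-one part contributes exactly `β² e eᵀ`.
-/

open Matrix

namespace Matrix

variable {k l m n : Type*} [Fintype m] [Fintype n] {R : Type*} [CommRing R]

theorem fromBlocks_zero_sub_smul_one_mul_self [DecidableEq m] [DecidableEq n]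
    (A : Matrix m n R) (A' : Matrix n m R) (c : R) :
    (fromBlocks 0 A A' 0 - c • 1) * (fromBlocks 0 A A' 0 - c • 1) =
      fromBlocks (c ^ 2 • 1 + A * A') ((-(2 * c)) • A) ((-(2 * c)) • A')
        (c ^ 2 • 1 + A' * A) := by
  rw [sub_eq_add_neg, ← fromBlocks_one, fromBlocks_smul, fromBlocks_neg, fromBlocks_add,
    fromBlocks_multiply]
  simp only [zero_add, add_zero, smul_zero, neg_zero, Matrix.neg_mul, Matrix.mul_neg,
    Matrix.smul_mul, Matrix.mul_smul, Matrix.one_mul, Matrix.mul_one]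
  congr 1 <;> module

theorem fromBlocks_diag_transpose_mul_mul (P : Matrix m k R) (Q : Matrix n l R)
    (X : Matrix m m R) (Y : Matrix m n R) (Z : Matrix n m R) (V : Matrix n n R) :
    (fromBlocks P 0 0 Q)ᵀ * fromBlocks X Y Z V * fromBlocks P 0 0 Q =
      fromBlocks (Pᵀ * X * P) (Pᵀ * Y * Q) (Qᵀ * Z * P) (Qᵀ * V * Q) := by
  simp [fromBlocks_transpose, fromBlocks_multiply]

theorem transpose_mul_smul_one_add_mul [DecidableEq m] [DecidableEq k]
    {P : Matrix m k R} (hP : Pᵀ * P = 1) (c : R) (X : Matrix m m R) :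
    Pᵀ * (c • 1 + X) * P = c • 1 + Pᵀ * X * P := by
  rw [Matrix.mul_add, Matrix.add_mul, Matrix.mul_smul, Matrix.mul_one, Matrix.smul_mul, hP]

theorem transpose_mul_self_of_orthogonal_extension [Fintype k] [DecidableEq k]
    {Q : Matrix n k R} {q : n → R} (hQ : Qᵀ * Q = 1) (hqQ : Qᵀ *ᵥ q = 0) (hq : q ⬝ᵥ q = 1)
    (C : Matrix k l R) (β : R) (e : l → R) :
    (Q * C + β • vecMulVec q e)ᵀ * (Q * C + β • vecMulVec q e) =
      Cᵀ * C + β ^ 2 • vecMulVec e e := by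
  have hQv : Qᵀ * vecMulVec q e = 0 := by rw [mul_vecMulVec, hqQ, zero_vecMulVec]
  have hvQ : (vecMulVec q e)ᵀ * Q = 0 := by
    rw [← transpose_transpose Q, ← transpose_mul, hQv, transpose_zero]
  have hvv : (vecMulVec q e)ᵀ * vecMulVec q e = vecMulVec e e := by
    rw [transpose_vecMulVec, vecMulVec_mul_vecMulVec, hq, one_smul]
  rw [transpose_add, transpose_smul, transpose_mul, Matrix.add_mul, Matrix.mul_add,
    Matrix.mul_add, Matrix.smul_mul, Matrix.smul_mul, Matrix.mul_smul, Matrix.mul_smul,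
    Matrix.mul_assoc, ← Matrix.mul_assoc Qᵀ, hQ, Matrix.one_mul, Matrix.mul_assoc Cᵀ, hQv,
    ← Matrix.mul_assoc _ Q, hvQ, hvv]
  simp only [Matrix.mul_zero, Matrix.zero_mul, smul_zero, zero_add, add_zero, smul_smul, sq]

section Compression

variable [Fintype k] [DecidableEq k]
  {A : Matrix m n R} {P : Matrix m k R} {Q : Matrix n k R} {B : Matrix k k R}

theorem transpose_mul_mul_eq_of_mul_eq (hP : Pᵀ * P = 1) (hAQ : A * Q = P * B) :
    Pᵀ * A * Q = B := by
  rw [Matrix.mul_assoc, hAQ, ← Matrix.mul_assoc, hP, Matrix.one_mul]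

theorem transpose_mul_transpose_mul_eq_of_mul_eq (hP : Pᵀ * P = 1) (hAQ : A * Q = P * B) :
    Qᵀ * Aᵀ * P = Bᵀ := by
  simpa only [transpose_mul, transpose_transpose, Matrix.mul_assoc] using
    congrArg transpose (transpose_mul_mul_eq_of_mul_eq hP hAQ)

theorem transpose_mul_transpose_mul_self_mul_eq_of_mul_eq (hP : Pᵀ * P = 1)
    (hAQ : A * Q = P * B) :
    Qᵀ * (Aᵀ * A) * Q = Bᵀ * B := by
  rw [Matrix.mul_assoc, Matrix.mul_assoc, hAQ, ← Matrix.mul_assoc Aᵀ, ← Matrix.mul_assoc,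
    ← Matrix.mul_assoc Qᵀ, transpose_mul_transpose_mul_eq_of_mul_eq hP hAQ]

theorem transpose_mul_mul_transpose_mul_eq_of_transpose_mul_eq {β : R} {q : n → R}
    {e : k → R} (hQ : Qᵀ * Q = 1) (hq : q ⬝ᵥ q = 1) (hqQ : Qᵀ *ᵥ q = 0)
    (hAP : Aᵀ * P = Q * Bᵀ + β • vecMulVec q e) :
    Pᵀ * (A * Aᵀ) * P = B * Bᵀ + β ^ 2 • vecMulVec e e := by
  have h := transpose_mul_self_of_orthogonal_extension hQ hqQ hq Bᵀ β e
  rwa [← hAP, transpose_transpose, transpose_mul, ← Matrix.mul_assoc, Matrix.mul_assoc Pᵀ]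
    at h

end Compression

end Matrix

/-- With W = diag(P_m, Q_m), the matrix C̃ = Wᵀ(Ã − τI)²W equals
[[τ²I + B_mB_mᵀ + β_m² e_m e_mᵀ, −2τ B_m],[−2τ B_mᵀ, τ²I + B_mᵀB_m]]. -/
theorem harmonic_C_matrix (M N m : ℕ) (A : Matrix (Fin M) (Fin N) ℝ)
    (P : Matrix (Fin M) (Fin (m+1)) ℝ) (Q : Matrix (Fin N) (Fin (m+1)) ℝ)
    (B : Matrix (Fin (m+1)) (Fin (m+1)) ℝ) (β τ : ℝ) (q : Fin N → ℝ)
    (hP : Pᵀ * P = 1) (hQ : Qᵀ * Q = 1)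
    (hq : q ⬝ᵥ q = 1) (hqQ : Qᵀ.mulVec q = 0)
    (h1 : A * Q = P * B)
    (h2 : Aᵀ * P = Q * Bᵀ + β • vecMulVec q (Pi.single (Fin.last m) 1)) :
    (fromBlocks P 0 0 Q)ᵀ *
        (((fromBlocks 0 A Aᵀ 0) - τ • 1) * ((fromBlocks 0 A Aᵀ 0) - τ • 1)) *
        (fromBlocks P 0 0 Q) =
      fromBlocks
        (τ ^ 2 • 1 + B * Bᵀ + β ^ 2 • vecMulVec (Pi.single (Fin.last m) 1)
          (Pi.single (Fin.last m) (1 : ℝ)))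
        ((-(2 * τ)) • B)
        ((-(2 * τ)) • Bᵀ)
        (τ ^ 2 • 1 + Bᵀ * B) := by
  rw [fromBlocks_zero_sub_smul_one_mul_self, fromBlocks_diag_transpose_mul_mul,
    transpose_mul_smul_one_add_mul hP, transpose_mul_smul_one_add_mul hQ,
    transpose_mul_mul_transpose_mul_eq_of_transpose_mul_eq hQ hq hqQ h2,
    transpose_mul_transpose_mul_self_mul_eq_of_mul_eq hP h1, add_assoc]
  simp only [Matrix.smul_mul, Matrix.mul_smul, transpose_mul_mul_eq_of_mul_eq hP h1,
    transpose_mul_transpose_mul_eq_of_mul_eq hP h1]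
end
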